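/- arXiv:2307.13660 — 3 statements merged into one kernel-verified Lean document; each statement's English description precedes it below -/
import Mathlib

section
/- For finite metric spaces X and Y, the Gromov–Hausdorff distance satisfies d_GH(X,Y) = (1/2) · min over all pairs (f : X → Y, g : Y → X) of the distortion of the relation R(f,g) = {(x, f(x)) : x ∈ X} ∪ {(g(y), y) : y ∈ Y}, where dis R = max over (x,y),(x',y') ∈ R of |d_X(x,x') − d_Y(y,y')|. -/
/-- The distortion of a relation `R ⊆ X × Y`:
`sup` over pairs of elements of `R` of `|d_X(x,x') − d_Y(y,y')|`. -/
noncomputable def relDis {X Y : Type*} [MetricSpace X] [MetricSpace Y]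
    (R : Set (X × Y)) : ℝ :=
  ⨆ p : R × R, |dist p.1.val.1 p.2.val.1 - dist p.1.val.2 p.2.val.2|

/-- The relation `R(f,g) = {(x, f(x)) : x ∈ X} ∪ {(g(y), y) : y ∈ Y}`. -/
def mapPairRel {X Y : Type*} (f : X → Y) (g : Y → X) : Set (X × Y) :=
  {p | p.2 = f p.1} ∪ {p | p.1 = g p.2}

/-! A correspondence `R` of distortion at most `2ε`, `ε > 0`, glues `X` and `Y` into a metric on
`X ⊕ Y` in which every related pair is at distance `ε`, so `d_GH ≤ ε`; letting `ε` decrease to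
`dis R / 2` gives `d_GH ≤ dis R / 2`. Conversely, embed `X` and `Y`
isometrically so that the Hausdorff distance of the images is `d_GH`, and send each point to a
nearest point of the other image: this gives maps `f`, `g` along which points move by at most
`d_GH`, so by the triangle inequality `R(f,g)` has distortion at most `2 d_GH`. -/

open Metric Set GromovHausdorff

section Distortion

variable {X Y : Type*} [MetricSpace X] [MetricSpace Y] {R : Set (X × Y)}

lemma relDis_nonneg (R : Set (X × Y)) : 0 ≤ relDis R :=
  Real.iSup_nonneg fun _ => abs_nonneg _

lemma relDis_le (hR : R.Nonempty) {C : ℝ}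
    (h : ∀ p ∈ R, ∀ q ∈ R, |dist p.1 q.1 - dist p.2 q.2| ≤ C) : relDis R ≤ C :=
  have : Nonempty R := hR.to_subtype
  ciSup_le fun pq => h _ pq.1.2 _ pq.2.2

lemma abs_dist_sub_dist_le_relDis [Finite X] [Finite Y] {p q : X × Y} (hp : p ∈ R)
    (hq : q ∈ R) : |dist p.1 q.1 - dist p.2 q.2| ≤ relDis R :=
  le_ciSup (f := fun pq : R × R => |dist pq.1.val.1 pq.2.val.1 - dist pq.1.val.2 pq.2.val.2|)
    (Set.finite_range _).bddAbove (⟨p, hp⟩, ⟨q, hq⟩)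

end Distortion

section MapPairRel

variable {X Y : Type*} (f : X → Y) (g : Y → X)

lemma mk_apply_mem_mapPairRel (x : X) : (x, f x) ∈ mapPairRel f g := Or.inl rfl

lemma mk_apply_mem_mapPairRel' (y : Y) : (g y, y) ∈ mapPairRel f g := Or.inr rfl

lemma mapPairRel_nonempty [Nonempty X] : (mapPairRel f g).Nonempty :=
  ⟨_, mk_apply_mem_mapPairRel f g (Classical.arbitrary X)⟩

end MapPairRel

lemma Isometry.abs_dist_sub_dist_le {X Y Z : Type*} [PseudoMetricSpace X] [PseudoMetricSpace Y]
    [PseudoMetricSpace Z] {Φ : X → Z} {Ψ : Y → Z} (hΦ : Isometry Φ) (hΨ : Isometry Ψ)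
    {a a' : X} {b b' : Y} {r : ℝ} (h : dist (Φ a) (Ψ b) ≤ r) (h' : dist (Φ a') (Ψ b') ≤ r) :
    |dist a a' - dist b b'| ≤ 2 * r := by
  rw [← hΦ.dist_eq, ← hΨ.dist_eq, abs_sub_le_iff]
  constructor
  · linarith [dist_triangle4 (Φ a) (Ψ b) (Ψ b') (Φ a'), dist_comm (Ψ b') (Φ a')]
  · linarith [dist_triangle4 (Ψ b) (Φ a) (Φ a') (Ψ b'), dist_comm (Ψ b) (Φ a)]

lemma IsCompact.exists_dist_le_hausdorffDist {Z : Type*} [PseudoMetricSpace Z] {s t : Set Z}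
    (hs : IsCompact s) (ht : IsCompact t) (htne : t.Nonempty) {x : Z} (hx : x ∈ s) :
    ∃ y ∈ t, dist x y ≤ hausdorffDist s t := by
  obtain ⟨y, hyt, hy⟩ := ht.exists_infDist_eq_dist htne x
  refine ⟨y, hyt, hy ▸ infDist_le_hausdorffDist_of_mem hx ?_⟩
  exact hausdorffEDist_ne_top_of_nonempty_of_bounded ⟨x, hx⟩ htne hs.isBounded ht.isBounded

section GromovHausdorff

variable {X Y : Type*} [MetricSpace X] [CompactSpace X] [Nonempty X]
  [MetricSpace Y] [CompactSpace Y] [Nonempty Y]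

theorem ghDist_le_of_correspondence {R : Set (X × Y)} (hX : ∀ x, ∃ y, (x, y) ∈ R)
    (hY : ∀ y, ∃ x, (x, y) ∈ R) {ε : ℝ} (hε : 0 < ε)
    (h : ∀ p ∈ R, ∀ q ∈ R, |dist p.1 q.1 - dist p.2 q.2| ≤ 2 * ε) :
    ghDist X Y ≤ ε := by
  have : Nonempty R := let ⟨y, hy⟩ := hX (Classical.arbitrary X); ⟨⟨_, hy⟩⟩
  let fst : R → X := fun p => p.1.1
  let snd : R → Y := fun p => p.1.2
  let _ : MetricSpace (X ⊕ Y) :=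
    glueMetricApprox fst snd ε hε fun p q => h _ p.2 _ q.2
  have hglued : ∀ p : R, dist (Sum.inl p.1.1 : X ⊕ Y) (Sum.inr p.1.2) = ε :=
    glueDist_glued_points fst snd ε
  calc ghDist X Y ≤ hausdorffDist (range (@Sum.inl X Y)) (range Sum.inr) :=
        ghDist_le_hausdorffDist (Isometry.of_dist_eq fun _ _ => rfl)
          (Isometry.of_dist_eq fun _ _ => rfl)
    _ ≤ ε := by
      refine hausdorffDist_le_of_mem_dist hε.le ?_ ?_
      · rintro _ ⟨x, rfl⟩
        obtain ⟨y, hy⟩ := hX x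
        exact ⟨_, mem_range_self y, (hglued ⟨_, hy⟩).le⟩
      · rintro _ ⟨y, rfl⟩
        obtain ⟨x, hx⟩ := hY y
        exact ⟨_, mem_range_self x, (dist_comm _ _).trans_le (hglued ⟨_, hx⟩).le⟩

theorem exists_mapPairRel_distortion_le_ghDist :
    ∃ (f : X → Y) (g : Y → X), ∀ p ∈ mapPairRel f g, ∀ q ∈ mapPairRel f g,
      |dist p.1 q.1 - dist p.2 q.2| ≤ 2 * ghDist X Y := by
  obtain ⟨Φ, Ψ, hΦ, hΨ, hgh⟩ := ghDist_eq_hausdorffDist X Y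
  have hcΦ : IsCompact (range Φ) := isCompact_range hΦ.continuous
  have hcΨ : IsCompact (range Ψ) := isCompact_range hΨ.continuous
  have hf : ∀ x, ∃ y, dist (Φ x) (Ψ y) ≤ ghDist X Y := fun x => by
    obtain ⟨_, ⟨y, rfl⟩, hy⟩ :=
      hcΦ.exists_dist_le_hausdorffDist hcΨ (range_nonempty Ψ) (mem_range_self x)
    exact ⟨y, hgh ▸ hy⟩
  have hg : ∀ y, ∃ x, dist (Φ x) (Ψ y) ≤ ghDist X Y := fun y => by
    obtain ⟨_, ⟨x, rfl⟩, hx⟩ :=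
      hcΨ.exists_dist_le_hausdorffDist hcΦ (range_nonempty Φ) (mem_range_self y)
    exact ⟨x, by rw [dist_comm, hgh, hausdorffDist_comm]; exact hx⟩
  choose f hf using hf
  choose g hg using hg
  have hclose : ∀ p ∈ mapPairRel f g, dist (Φ p.1) (Ψ p.2) ≤ ghDist X Y := by
    rintro ⟨x, y⟩ (h | h) <;> simp only [mem_ofPred_eq] at h <;> subst h
    exacts [hf x, hg y]
  exact ⟨f, g, fun p hp q hq => hΦ.abs_dist_sub_dist_le hΨ (hclose p hp) (hclose q hq)⟩

theorem ghDist_le_half_relDis [Finite X] [Finite Y] {R : Set (X × Y)}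
    (hX : ∀ x, ∃ y, (x, y) ∈ R) (hY : ∀ y, ∃ x, (x, y) ∈ R) :
    ghDist X Y ≤ relDis R / 2 := by
  refine le_of_forall_gt_imp_ge_of_dense fun ε hε => ?_
  refine ghDist_le_of_correspondence hX hY (lt_of_le_of_lt ?_ hε) fun p hp q hq => ?_
  · linarith [relDis_nonneg R]
  · linarith [abs_dist_sub_dist_le_relDis hp hq]

end GromovHausdorff

/-- For finite metric spaces, the Gromov–Hausdorff distance equals half the minimum,
over all pairs of maps `(f : X → Y, g : Y → X)`, of the distortion of `R(f,g)`. -/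
theorem stmt0 {X Y : Type*} [MetricSpace X] [Fintype X] [Nonempty X]
    [MetricSpace Y] [Fintype Y] [Nonempty Y] :
    GromovHausdorff.ghDist X Y =
      (1 / 2) * ⨅ fg : (X → Y) × (Y → X), relDis (mapPairRel fg.1 fg.2) := by
  have half_le : ∀ f g, ghDist X Y ≤ relDis (mapPairRel f g) / 2 := fun f g =>
    ghDist_le_half_relDis (fun x => ⟨_, mk_apply_mem_mapPairRel f g x⟩)
      (fun y => ⟨_, mk_apply_mem_mapPairRel' f g y⟩)
  obtain ⟨f, g, hfg⟩ := exists_mapPairRel_distortion_le_ghDist (X := X) (Y := Y)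
  have hleast : IsLeast (range fun fg : (X → Y) × (Y → X) => relDis (mapPairRel fg.1 fg.2))
      (2 * ghDist X Y) := by
    refine ⟨⟨(f, g), le_antisymm (relDis_le (mapPairRel_nonempty f g) hfg) ?_⟩, ?_⟩
    · linarith [half_le f g]
    · rintro _ ⟨fg, rfl⟩
      linarith [half_le fg.1 fg.2]
  rw [iInf, hleast.csInf_eq]
  ring
end

section
/- Let c > 1 and ρ > 0, and let n, m ≥ 1 with n + m ≥ 3. Suppose c ≥ ((n+m)² − n − m)/2)^{1/ρ}. Let A, B ∈ ℝ^{(n+m)×(n+m)} be symmetric matrices with zero diagonal such that ‖A‖_∞ ≥ ‖B‖_∞ + ρ. Then ‖c^A + c^{−A}‖₁ > ‖c^B + c^{−B}‖₁, where c^A denotes entrywise exponentiation and ‖·‖₁ the sum of absolute values of entries. -/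
/-- The entrywise sup-norm of a square real matrix. -/
noncomputable def supNorm {N : ℕ} (A : Matrix (Fin N) (Fin N) ℝ) : ℝ :=
  ⨆ p : Fin N × Fin N, |A p.1 p.2|

private lemma cosh_ge_two {c x : ℝ} (hc : 1 < c) : 2 ≤ c ^ x + c ^ (-x) := by
  have hc0 : (0:ℝ) < c := lt_trans one_pos hc
  have hcx : 0 < c ^ x := Real.rpow_pos_of_pos hc0 x
  rw [Real.rpow_neg hc0.le]
  nlinarith [sq_nonneg (c ^ x - 1), mul_inv_cancel₀ hcx.ne']

private lemma cosh_le {c x b : ℝ} (hc : 1 < c) (hb : |x| ≤ b) :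
    c ^ x + c ^ (-x) ≤ c ^ b + 1 := by
  rcases le_total 0 x with hx | hx
  · have h1 : c ^ x ≤ c ^ b :=
      Real.rpow_le_rpow_of_exponent_le hc.le (by rwa [abs_of_nonneg hx] at hb)
    have h2 : c ^ (-x) ≤ 1 :=
      Real.rpow_le_one_of_one_le_of_nonpos hc.le (by linarith)
    linarith
  · have h1 : c ^ (-x) ≤ c ^ b :=
      Real.rpow_le_rpow_of_exponent_le hc.le (by rwa [abs_of_nonpos hx] at hb)
    have h2 : c ^ x ≤ 1 := Real.rpow_le_one_of_one_le_of_nonpos hc.le hx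
    linarith

private lemma cosh_ge_abs {c x : ℝ} (hc : 1 < c) : c ^ |x| ≤ c ^ x + c ^ (-x) := by
  have hc0 : (0:ℝ) < c := lt_trans one_pos hc
  rcases abs_cases x with ⟨h, _⟩ | ⟨h, _⟩
  · rw [h]; have := (Real.rpow_pos_of_pos hc0 (-x)); linarith
  · rw [h]; have := (Real.rpow_pos_of_pos hc0 x); linarith

/-- Core monotonicity step: if `c` exceeds the threshold determined by `ρ`, and
`A`, `B` are symmetric with zero diagonal with `‖A‖_∞ ≥ ‖B‖_∞ + ρ`, then
`‖c^A + c^{−A}‖₁ > ‖c^B + c^{−B}‖₁`. -/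
theorem stmt3 {n m : ℕ} (hn : 1 ≤ n) (hm : 1 ≤ m) (hnm : 3 ≤ n + m)
    {c ρ : ℝ} (hc : 1 < c) (hρ : 0 < ρ)
    (hthr : (((n + m : ℝ) ^ 2 - n - m) / 2) ^ (1 / ρ) ≤ c)
    (A B : Matrix (Fin (n + m)) (Fin (n + m)) ℝ)
    (hAs : A.IsSymm) (hBs : B.IsSymm)
    (hAd : ∀ i, A i i = 0) (hBd : ∀ i, B i i = 0)
    (hgap : supNorm B + ρ ≤ supNorm A) :
    ∑ i, ∑ j, (c ^ (B i j) + c ^ (-(B i j))) <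
      ∑ i, ∑ j, (c ^ (A i j) + c ^ (-(A i j))) := by
  have hc0 : (0:ℝ) < c := lt_trans one_pos hc
  have hN3 : 3 ≤ n + m := hnm
  have hNr : (3:ℝ) ≤ ((n + m : ℕ):ℝ) := by exact_mod_cast hN3
  haveI : Nonempty (Fin (n + m)) := ⟨⟨0, by omega⟩⟩
  have bddA : BddAbove (Set.range fun p : Fin (n+m) × Fin (n+m) => |A p.1 p.2|) :=
    Set.Finite.bddAbove (Set.finite_range _)
  have bddB : BddAbove (Set.range fun p : Fin (n+m) × Fin (n+m) => |B p.1 p.2|) :=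
    Set.Finite.bddAbove (Set.finite_range _)
  have hBle : ∀ i j, |B i j| ≤ supNorm B := fun i j => le_ciSup bddB (i, j)
  obtain ⟨i0⟩ := (inferInstance : Nonempty (Fin (n+m)))
  have hb0 : 0 ≤ supNorm B := by
    have := hBle i0 i0
    rw [hBd i0, abs_zero] at this
    exact this
  obtain ⟨p, hp⟩ := Finite.exists_max (fun p : Fin (n+m) × Fin (n+m) => |A p.1 p.2|)
  have hsup : supNorm A = |A p.1 p.2| :=
    le_antisymm (ciSup_le hp) (le_ciSup bddA p)
  set a := supNorm A with hadef
  set b := supNorm B with hbdef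
  have hab : b + ρ ≤ a := hgap
  have hane : p.1 ≠ p.2 := by
    intro h
    rw [h, hAd, abs_zero] at hsup
    linarith
  -- upper bound for the B-sum
  have hBsum : ∑ i, ∑ j, (c ^ (B i j) + c ^ (-(B i j)))
      ≤ ∑ i : Fin (n+m), ∑ j : Fin (n+m), (if i = j then (2:ℝ) else c ^ b + 1) := by
    refine Finset.sum_le_sum fun i _ => Finset.sum_le_sum fun j _ => ?_
    by_cases h : i = j
    · subst h
      rw [hBd i, neg_zero, Real.rpow_zero]
      norm_num
    · simp only [h, if_false]
      exact cosh_le hc (hBle i j)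
  have hBsum2 : ∑ i : Fin (n+m), ∑ j : Fin (n+m), (if i = j then (2:ℝ) else c ^ b + 1)
      = ((n + m : ℕ):ℝ) * (((n + m : ℕ):ℝ) * (c ^ b + 1) + (1 - c ^ b)) := by
    have hrow : ∀ i : Fin (n+m), ∑ j : Fin (n+m), (if i = j then (2:ℝ) else c ^ b + 1)
        = ((n + m : ℕ):ℝ) * (c ^ b + 1) + (1 - c ^ b) := by
      intro i
      calc ∑ j : Fin (n+m), (if i = j then (2:ℝ) else c ^ b + 1)
          = ∑ j : Fin (n+m), ((c ^ b + 1) + (if i = j then (1 - c ^ b) else 0)) :=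
            Finset.sum_congr rfl fun j _ => by split_ifs <;> ring
        _ = ((n + m : ℕ):ℝ) * (c ^ b + 1) + (1 - c ^ b) := by
            rw [Finset.sum_add_distrib, Finset.sum_const, Finset.sum_ite_eq]
            simp only [Finset.card_univ, Fintype.card_fin, nsmul_eq_mul, Finset.mem_univ, if_true]
            try push_cast
            try ring
    rw [Finset.sum_congr rfl fun i _ => hrow i, Finset.sum_const]
    simp only [Finset.card_univ, Fintype.card_fin, nsmul_eq_mul]
  -- lower bound for the A-sum
  have hAb : ∀ i j, |A i j| ≤ a := fun i j => by
    rw [hadef]; exact le_ciSup bddA (i, j)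
  have hAsum : ∑ i : Fin (n+m), ∑ j : Fin (n+m),
      ((2:ℝ) + (if i = p.1 ∧ j = p.2 then c ^ a - 2 else 0)
        + (if i = p.2 ∧ j = p.1 then c ^ a - 2 else 0))
      ≤ ∑ i, ∑ j, (c ^ (A i j) + c ^ (-(A i j))) := by
    refine Finset.sum_le_sum fun i _ => Finset.sum_le_sum fun j _ => ?_
    have h2 : (2:ℝ) ≤ c ^ (A i j) + c ^ (-(A i j)) := cosh_ge_two hc
    split_ifs with h1 h2' h2'
    · exact absurd (h1.1.symm.trans h2'.1) hane
    · have hx : |A i j| = a := by rw [h1.1, h1.2, hsup]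
      have := cosh_ge_abs (x := A i j) hc
      rw [hx] at this
      linarith
    · have hx : |A i j| = a := by
        rw [h2'.1, h2'.2, hAs.apply, hsup]
      have := cosh_ge_abs (x := A i j) hc
      rw [hx] at this
      linarith
    · linarith
  have hAsum2 : ∑ i : Fin (n+m), ∑ j : Fin (n+m),
      ((2:ℝ) + (if i = p.1 ∧ j = p.2 then c ^ a - 2 else 0)
        + (if i = p.2 ∧ j = p.1 then c ^ a - 2 else 0))
      = 2 * ((n + m : ℕ):ℝ) * ((n + m : ℕ):ℝ) + (c ^ a - 2) + (c ^ a - 2) := by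
    have e1 : ∑ i : Fin (n+m), ∑ j : Fin (n+m),
        (if i = p.1 ∧ j = p.2 then c ^ a - 2 else 0) = c ^ a - 2 := by
      simp [ite_and, Finset.sum_ite_eq']
    have e2 : ∑ i : Fin (n+m), ∑ j : Fin (n+m),
        (if i = p.2 ∧ j = p.1 then c ^ a - 2 else 0) = c ^ a - 2 := by
      simp [ite_and, Finset.sum_ite_eq']
    rw [Finset.sum_congr rfl fun i _ => Finset.sum_add_distrib,
        Finset.sum_congr rfl fun i _ => by
          rw [Finset.sum_add_distrib (s := (Finset.univ : Finset (Fin (n+m))))]]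
    rw [Finset.sum_add_distrib, Finset.sum_add_distrib]
    simp only [Finset.sum_const, Finset.card_univ, Fintype.card_fin, nsmul_eq_mul]
    rw [e1, e2]
    push_cast
    ring
  -- numeric facts
  have h1 : c ^ b * c ^ ρ ≤ c ^ a := by
    rw [← Real.rpow_add hc0]
    exact Real.rpow_le_rpow_of_exponent_le hc.le hab
  have hx0 : (0:ℝ) ≤ (((n + m : ℕ):ℝ) ^ 2 - ((n + m : ℕ):ℝ)) / 2 := by nlinarith
  have hthr' : ((((n + m : ℕ):ℝ) ^ 2 - ((n + m : ℕ):ℝ)) / 2) ^ (1 / ρ) ≤ c := by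
    have : ((n + m : ℝ) ^ 2 - n - m) / 2 = (((n + m : ℕ):ℝ) ^ 2 - ((n + m : ℕ):ℝ)) / 2 := by
      push_cast; ring
    rwa [this] at hthr
  have h2 : (((n + m : ℕ):ℝ) ^ 2 - ((n + m : ℕ):ℝ)) / 2 ≤ c ^ ρ := by
    have key : ((((n + m : ℕ):ℝ) ^ 2 - ((n + m : ℕ):ℝ)) / 2) ^ ((1 / ρ) * ρ) ≤ c ^ ρ := by
      rw [Real.rpow_mul hx0]
      exact Real.rpow_le_rpow (Real.rpow_nonneg hx0 _) hthr' hρ.le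
    rwa [one_div_mul_cancel hρ.ne', Real.rpow_one] at key
  have hcb1 : (1:ℝ) ≤ c ^ b := by
    have := Real.rpow_le_rpow_of_exponent_le hc.le hb0
    rwa [Real.rpow_zero] at this
  have hcb0 : (0:ℝ) ≤ c ^ b := by linarith
  have hmul : c ^ b * ((((n + m : ℕ):ℝ) ^ 2 - ((n + m : ℕ):ℝ)) / 2) ≤ c ^ b * c ^ ρ :=
    mul_le_mul_of_nonneg_left h2 hcb0
  calc ∑ i, ∑ j, (c ^ (B i j) + c ^ (-(B i j)))
      ≤ ((n + m : ℕ):ℝ) * (((n + m : ℕ):ℝ) * (c ^ b + 1) + (1 - c ^ b)) := by rw [← hBsum2]; exact hBsum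
    _ < 2 * ((n + m : ℕ):ℝ) * ((n + m : ℕ):ℝ) + (c ^ a - 2) + (c ^ a - 2) := by nlinarith
    _ ≤ ∑ i, ∑ j, (c ^ (A i j) + c ^ (-(A i j))) := by rw [← hAsum2]; exact hAsum
end

section
/- Let S be a point of the bi-mapping polytope 𝒮 and let R* be a nearest vertex of 𝒮 to S in the Frobenius norm. Then for every face Φ of 𝒮 with S ∈ Φ, also R* ∈ Φ; equivalently, any R* ∈ argmin_{R ∈ ℛ} ‖S − R‖₂ satisfies R*_{ij} = 0 whenever S_{ij} = 0. -/
/-- Membership in the polytope of row-stochastic matrices with zero pattern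
outside the permissible position set `P`. -/
def inPattern {N : ℕ} (P : Set (Fin N × Fin N)) (M : Matrix (Fin N) (Fin N) ℝ) : Prop :=
  (∀ i j, 0 ≤ M i j) ∧ (∀ i, ∑ j, M i j = 1) ∧ ∀ i j, (i, j) ∉ P → M i j = 0

/-- A vertex: a 0/1 matrix in the polytope. -/
def isVert {N : ℕ} (P : Set (Fin N × Fin N)) (M : Matrix (Fin N) (Fin N) ℝ) : Prop :=
  inPattern P M ∧ ∀ i j, M i j = 0 ∨ M i j = 1

/-- Row sum formula for a 0/1 row. -/
lemma row_cost {N : ℕ} (S : Matrix (Fin N) (Fin N) ℝ) (i : Fin N)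
    (M : Matrix (Fin N) (Fin N) ℝ) (hM : ∀ b, M i b = 0 ∨ M i b = 1) :
    ∑ b, (S i b - M i b) ^ 2
      = ∑ b, (S i b) ^ 2 - 2 * ∑ b, S i b * M i b + ∑ b, M i b := by
  have h : ∀ b : Fin N, (S i b - M i b) ^ 2
      = (S i b) ^ 2 - 2 * (S i b * M i b) + M i b := by
    intro b
    rcases hM b with h | h <;> rw [h] <;> ring
  rw [Finset.sum_congr rfl (fun b _ => h b), Finset.sum_add_distrib,
    Finset.sum_sub_distrib, Finset.mul_sum]

/-- Any nearest vertex `R*` (in Frobenius norm) to a point `S` of the polytope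
satisfies `R*_{ij} = 0` whenever `S_{ij} = 0`; in particular `R*` belongs to every
face containing `S`. -/
theorem stmt10 {N : ℕ} (P : Set (Fin N × Fin N))
    (S Rstar : Matrix (Fin N) (Fin N) ℝ)
    (hS : inPattern P S) (hRstar : isVert P Rstar)
    (hmin : ∀ R : Matrix (Fin N) (Fin N) ℝ, isVert P R →
      ∑ i, ∑ j, (S i j - Rstar i j) ^ 2 ≤ ∑ i, ∑ j, (S i j - R i j) ^ 2) :
    ∀ i j, S i j = 0 → Rstar i j = 0 := by
  intro i j hSij
  by_contra hR
  obtain ⟨⟨hRnn, hRrow, hRpat⟩, hR01⟩ := hRstar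
  obtain ⟨hSnn, hSrow, hSpat⟩ := hS
  have hRij : Rstar i j = 1 := (hR01 i j).resolve_left hR
  -- all other entries of row i of Rstar vanish
  have hother : ∀ b, b ≠ j → Rstar i b = 0 := by
    intro b hb
    have hsum : Rstar i j + ∑ b ∈ Finset.univ.erase j, Rstar i b = 1 := by
      rw [Finset.add_sum_erase _ _ (Finset.mem_univ j)]; exact hRrow i
    have hz : ∑ b ∈ Finset.univ.erase j, Rstar i b = 0 := by
      rw [hRij] at hsum; linarith
    exact (Finset.sum_eq_zero_iff_of_nonneg (fun x _ => hRnn i x)).mp hz b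
      (Finset.mem_erase.mpr ⟨hb, Finset.mem_univ b⟩)
  -- there is a positive entry in row i of S
  have hj' : ∃ b, 0 < S i b := by
    by_contra h
    push_neg at h
    have : ∑ b, S i b = 0 :=
      Finset.sum_eq_zero (fun b _ => le_antisymm (h b) (hSnn i b))
    rw [hSrow i] at this; norm_num at this
  obtain ⟨j', hj'⟩ := hj'
  have hPij' : (i, j') ∈ P := by
    by_contra hp
    have := hSpat i j' hp; linarith
  -- the competing vertex
  set R : Matrix (Fin N) (Fin N) ℝ :=
    fun a b => if a = i then (if b = j' then 1 else 0) else Rstar a b with hRdef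
  have hRi : ∀ b, R i b = if b = j' then 1 else 0 := by intro b; simp [hRdef]
  have hV : isVert P R := by
    refine ⟨⟨?_, ?_, ?_⟩, ?_⟩
    · intro a b
      by_cases ha : a = i
      · subst ha; rw [hRi]; split <;> norm_num
      · simp only [hRdef, if_neg ha]; exact hRnn a b
    · intro a
      by_cases ha : a = i
      · subst ha; simp [hRi]
      · simp only [hRdef, if_neg ha]; exact hRrow a
    · intro a b hp
      by_cases ha : a = i
      · subst ha; rw [hRi]
        by_cases hb : b = j'
        · subst hb; exact absurd hPij' hp
        · simp [hb]
      · simp only [hRdef, if_neg ha]; exact hRpat a b hp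
    · intro a b
      by_cases ha : a = i
      · subst ha; rw [hRi]; split
        · right; rfl
        · left; rfl
      · simp only [hRdef, if_neg ha]; exact hR01 a b
  -- row i costs
  have hcRs : ∑ b, (S i b - Rstar i b) ^ 2 = ∑ b, (S i b) ^ 2 + 1 := by
    rw [row_cost S i Rstar (fun b => hR01 i b)]
    have h1 : ∑ b, S i b * Rstar i b = 0 := by
      apply Finset.sum_eq_zero
      intro b _
      by_cases hb : b = j
      · subst hb; rw [hSij]; ring
      · rw [hother b hb]; ring
    rw [h1, hRrow i]; ring
  have hcR : ∑ b, (S i b - R i b) ^ 2 = ∑ b, (S i b) ^ 2 + 1 - 2 * S i j' := by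
    rw [row_cost S i R (fun b => hV.2 i b)]
    have h1 : ∑ b, S i b * R i b = S i j' := by
      have : ∀ b : Fin N, S i b * R i b = if b = j' then S i j' else 0 := by
        intro b; rw [hRi]
        by_cases hb : b = j' <;> simp [hb]
      rw [Finset.sum_congr rfl (fun b _ => this b), Finset.sum_ite_eq' Finset.univ j']
      simp
    have h2 : ∑ b, R i b = 1 := by simp [hRi]
    rw [h1, h2]; ring
  -- compare total costs
  have hrows : ∀ a, a ≠ i → ∑ b, (S a b - R a b) ^ 2 = ∑ b, (S a b - Rstar a b) ^ 2 := by
    intro a ha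
    apply Finset.sum_congr rfl
    intro b _
    simp [hRdef, ha]
  have htot : ∑ a, ∑ b, (S a b - R a b) ^ 2
      = ∑ a, ∑ b, (S a b - Rstar a b) ^ 2 - 2 * S i j' := by
    have hsub : ∑ a, (∑ b, (S a b - R a b) ^ 2 - ∑ b, (S a b - Rstar a b) ^ 2)
        = -(2 * S i j') := by
      rw [Finset.sum_eq_single i]
      · rw [hcR, hcRs]; ring
      · intro a _ ha; rw [hrows a ha]; ring
      · intro h; exact absurd (Finset.mem_univ i) h
    rw [Finset.sum_sub_distrib] at hsub
    linarith
  have := hmin R hV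
  rw [htot] at this
  linarith
end
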